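/- arXiv:2402.02700 — 3 statements merged into one kernel-verified Lean document; each statement's English description precedes it below -/
import Mathlib

section
/- (Ridge regression pointwise error bound.) Under the setting of the ridge regression bias identity, if additionally ‖η‖₂ ≤ √d, then for any ψ ∈ ℝᵈ, |⟨η̂ − η, ψ⟩| ≤ √(ξ d) · ‖ψ‖_{Λ⁻¹}. -/
/-! The bias of the ridge estimator is `η̂ - η = -ξ Λ⁻¹ η`. Cauchy–Schwarz for the positive
semidefinite form `Λ⁻¹` bounds `|⟨Λ⁻¹ η, ψ⟩|` by `‖η‖_{Λ⁻¹} ‖ψ‖_{Λ⁻¹}`, and since `Λ ⪰ ξ I`,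
`ξ ‖η‖²_{Λ⁻¹} ≤ ‖η‖² ≤ d`. -/

open Matrix

namespace Matrix

variable {n ι : Type*} [Fintype n]

theorem PosSemidef.dotProduct_mulVec_sq_le {M : Matrix n n ℝ} (hM : M.PosSemidef) (x y : n → ℝ) :
    (x ⬝ᵥ (M *ᵥ y)) ^ 2 ≤ (x ⬝ᵥ (M *ᵥ x)) * (y ⬝ᵥ (M *ᵥ y)) := by
  let := M.toSeminormedAddCommGroup hM
  let := M.toInnerProductSpace hM
  have h := real_inner_mul_inner_self_le x y
  change (M *ᵥ y ⬝ᵥ star x) * (M *ᵥ y ⬝ᵥ star x)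
    ≤ (M *ᵥ x ⬝ᵥ star x) * (M *ᵥ y ⬝ᵥ star y) at h
  simpa only [star_trivial, dotProduct_comm _ x, dotProduct_comm _ y, sq] using h

theorem PosSemidef.abs_dotProduct_mulVec_le {M : Matrix n n ℝ} (hM : M.PosSemidef) (x y : n → ℝ) :
    |x ⬝ᵥ (M *ᵥ y)| ≤ √(x ⬝ᵥ (M *ᵥ x)) * √(y ⬝ᵥ (M *ᵥ y)) := by
  rw [← Real.sqrt_mul (by simpa using hM.dotProduct_mulVec_nonneg x)]
  exact Real.abs_le_sqrt (hM.dotProduct_mulVec_sq_le x y)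

theorem posSemidef_sum_vecMulVec_self (s : Finset ι) (ψ : ι → n → ℝ) :
    (∑ i ∈ s, vecMulVec (ψ i) (ψ i)).PosSemidef :=
  posSemidef_sum s fun i _ => posSemidef_vecMulVec_self_star (ψ i)

theorem sum_vecMulVec_self_mulVec {R : Type*} [CommSemiring R] (s : Finset ι) (ψ : ι → n → R)
    (x : n → R) : (∑ i ∈ s, vecMulVec (ψ i) (ψ i)) *ᵥ x = ∑ i ∈ s, (ψ i ⬝ᵥ x) • ψ i := by
  simp [sum_mulVec, vecMulVec_mulVec]

variable [DecidableEq n]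

theorem inv_add_smul_one_mulVec_mulVec_sub {R : Type*} [CommRing R] {A : Matrix n n R} {ξ : R}
    (h : IsUnit (A + ξ • 1).det) (x : n → R) :
    (A + ξ • 1)⁻¹ *ᵥ (A *ᵥ x) - x = -(ξ • (A + ξ • 1)⁻¹ *ᵥ x) := by
  have hA : A *ᵥ x = (A + ξ • 1) *ᵥ x - ξ • x := by
    rw [add_mulVec, smul_mulVec, one_mulVec, add_sub_cancel_right]
  rw [hA, mulVec_sub, mulVec_mulVec, nonsing_inv_mul _ h, one_mulVec, mulVec_smul]
  abel

theorem mul_dotProduct_inv_add_smul_one_mulVec_le {A : Matrix n n ℝ} (hA : A.PosSemidef) {ξ : ℝ}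
    (hξ : 0 < ξ) (x : n → ℝ) : ξ * (x ⬝ᵥ ((A + ξ • 1)⁻¹ *ᵥ x)) ≤ x ⬝ᵥ x := by
  have hΛ : (A + ξ • 1).PosDef := PosDef.posSemidef_add hA (PosDef.one.smul hξ)
  set y := (A + ξ • 1)⁻¹ *ᵥ x
  have hx : x = A *ᵥ y + ξ • y := by
    rw [← one_mulVec x, ← mul_nonsing_inv _ hΛ.det_pos.ne'.isUnit, ← mulVec_mulVec, add_mulVec,
      smul_mulVec, one_mulVec]
  have hgap : x ⬝ᵥ x - ξ * (x ⬝ᵥ y) = A *ᵥ y ⬝ᵥ A *ᵥ y + ξ * (y ⬝ᵥ A *ᵥ y) :=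
    calc x ⬝ᵥ x - ξ * (x ⬝ᵥ y) = x ⬝ᵥ (x - ξ • y) := by
          rw [dotProduct_sub, dotProduct_smul, smul_eq_mul]
      _ = (A *ᵥ y + ξ • y) ⬝ᵥ A *ᵥ y := by rw [hx, add_sub_cancel_right]
      _ = A *ᵥ y ⬝ᵥ A *ᵥ y + ξ * (y ⬝ᵥ A *ᵥ y) := by
          rw [add_dotProduct, smul_dotProduct, smul_eq_mul]
  have hAy : 0 ≤ y ⬝ᵥ A *ᵥ y := by simpa using hA.dotProduct_mulVec_nonneg y
  have hAyAy : 0 ≤ A *ᵥ y ⬝ᵥ A *ᵥ y := by simpa using dotProduct_star_self_nonneg (A *ᵥ y)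
  nlinarith

end Matrix

/-- Ridge regression pointwise error bound:
`|⟨η̂ − η, ψ⟩| ≤ √(ξ d) ‖ψ‖_{Λ⁻¹}`. -/
theorem ridge_pointwise_error {d m : ℕ} (ψ : Fin m → Fin d → ℝ) (η : Fin d → ℝ)
    (hη : Real.sqrt (η ⬝ᵥ η) ≤ Real.sqrt d)
    (ξ : ℝ) (hξ : 0 < ξ) (r : Fin m → ℝ) (hr : ∀ τ, r τ = ψ τ ⬝ᵥ η)
    (Λ : Matrix (Fin d) (Fin d) ℝ)
    (hΛ : Λ = ∑ τ, Matrix.vecMulVec (ψ τ) (ψ τ) + ξ • (1 : Matrix (Fin d) (Fin d) ℝ))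
    (ηhat : Fin d → ℝ) (hηhat : ηhat = Λ⁻¹ *ᵥ (∑ τ, r τ • ψ τ)) :
    ∀ ψ0 : Fin d → ℝ,
      |(ηhat - η) ⬝ᵥ ψ0| ≤ Real.sqrt (ξ * d) * Real.sqrt (ψ0 ⬝ᵥ (Λ⁻¹ *ᵥ ψ0)) := by
  intro ψ0
  set A := ∑ τ, vecMulVec (ψ τ) (ψ τ)
  have hA : A.PosSemidef := posSemidef_sum_vecMulVec_self _ ψ
  have hΛpd : Λ.PosDef := hΛ ▸ PosDef.posSemidef_add hA (PosDef.one.smul hξ)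
  have hbias : ηhat - η = -(ξ • Λ⁻¹ *ᵥ η) := by
    have hAη : A *ᵥ η = ∑ τ, r τ • ψ τ := by simp only [A, sum_vecMulVec_self_mulVec, hr]
    rw [hηhat, ← hAη]
    subst hΛ
    exact inv_add_smul_one_mulVec_mulVec_sub hΛpd.det_pos.ne'.isUnit η
  have hηη : η ⬝ᵥ η ≤ d := (Real.sqrt_le_sqrt_iff (Nat.cast_nonneg d)).mp hη
  have hridge : ξ * (η ⬝ᵥ (Λ⁻¹ *ᵥ η)) ≤ η ⬝ᵥ η :=
    hΛ ▸ mul_dotProduct_inv_add_smul_one_mulVec_le hA hξ η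
  calc |(ηhat - η) ⬝ᵥ ψ0| = ξ * |ψ0 ⬝ᵥ (Λ⁻¹ *ᵥ η)| := by
        rw [hbias, neg_dotProduct, abs_neg, smul_dotProduct, smul_eq_mul, abs_mul, abs_of_pos hξ,
          dotProduct_comm]
    _ ≤ ξ * (√(ψ0 ⬝ᵥ (Λ⁻¹ *ᵥ ψ0)) * √(η ⬝ᵥ (Λ⁻¹ *ᵥ η))) := by
        gcongr
        exact hΛpd.inv.posSemidef.abs_dotProduct_mulVec_le ψ0 η
    _ = √ξ * √(ξ * (η ⬝ᵥ (Λ⁻¹ *ᵥ η))) * √(ψ0 ⬝ᵥ (Λ⁻¹ *ᵥ ψ0)) := by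
        rw [Real.sqrt_mul hξ.le, ← mul_assoc √ξ, Real.mul_self_sqrt hξ.le]
        ring
    _ ≤ √ξ * √d * √(ψ0 ⬝ᵥ (Λ⁻¹ *ᵥ ψ0)) := by
        gcongr
        exact hridge.trans hηη
    _ = √(ξ * d) * √(ψ0 ⬝ᵥ (Λ⁻¹ *ᵥ ψ0)) := by rw [Real.sqrt_mul hξ.le]
end

section
/- (Simulation lemma, finite case.) Let two finite-horizon MDPs share finite state and action spaces and horizon H but have transitions P', P'' and rewards r', r''. For any policy π and any step h and state s_h: V^π_{h,P',r'}(s_h) − V^π_{h,P'',r''}(s_h) = ∑_{h'=h}^{H} E_{(s_{h'},a_{h'}) ∼ (P'',π) | s_h}[ r'(s_{h'},a_{h'}) − r''(s_{h'},a_{h'}) + (P'_{h'} − P''_{h'}) V^π_{h'+1,P',r'}(s_{h'},a_{h'}) ]. -/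
def IsProbKernel {S A : Type*} [Fintype S] (P : ℕ → S → A → S → ℝ) : Prop :=
  ∀ h s a, (∀ s', 0 ≤ P h s a s') ∧ ∑ s', P h s a s' = 1

def IsPolicy {S A : Type*} [Fintype A] (pol : ℕ → S → A → ℝ) : Prop :=
  ∀ h s, (∀ a, 0 ≤ pol h s a) ∧ ∑ a, pol h s a = 1

def IsVal {S A : Type*} [Fintype S] [Fintype A] (H : ℕ)
    (P : ℕ → S → A → S → ℝ) (pol : ℕ → S → A → ℝ) (r : ℕ → S → A → ℝ)
    (Q : ℕ → S → A → ℝ) (V : ℕ → S → ℝ) : Prop :=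
  (∀ s a, Q (H + 1) s a = 0) ∧ (∀ s, V (H + 1) s = 0) ∧
  (∀ h, 1 ≤ h → h ≤ H → ∀ s a,
      Q h s a = r h s a + ∑ s', P h s a s' * V (h + 1) s') ∧
  (∀ h, 1 ≤ h → h ≤ H → ∀ s, V h s = ∑ a, pol h s a * Q h s a)

/-- `expect P pol h k f s = E[f(s_{h+k}) | s_h = s]` where the trajectory follows
transition `P` and policy `pol`. -/
def expect {S A : Type*} [Fintype S] [Fintype A]
    (P : ℕ → S → A → S → ℝ) (pol : ℕ → S → A → ℝ) (h : ℕ) :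
    ℕ → (S → ℝ) → S → ℝ
  | 0, f => f
  | k + 1, f => fun s => ∑ a, pol h s a * ∑ s', P h s a s' * expect P pol (h + 1) k f s'

/-! The value gap `D_h = V'_h - V''_h` satisfies the backward recursion
`D_h = g_h + E^{P''}_h[D_{h+1}]` with `D_{H+1} = 0`, where `g_h = bellmanDiscrepancy … h` is
the mismatch between the two Bellman equations evaluated at `V'`: the Bellman equation of
`V'` is rewritten as that of `V''` plus the reward and transition differences. Unrolling the
recursion along trajectories of `P''` from step `h` to `H` expresses `D_h` as the sum of
the expected discrepancies. -/

section Expect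

variable {S A : Type*} [Fintype S] [Fintype A]
  (P : ℕ → S → A → S → ℝ) (pol : ℕ → S → A → ℝ)

theorem expect_succ (h k : ℕ) (f : S → ℝ) :
    expect P pol h (k + 1) f = expect P pol h 1 (expect P pol (h + 1) k f) :=
  rfl

theorem expect_one_sum {ι : Type*} (t : Finset ι) (h : ℕ) (F : ι → S → ℝ) (s : S) :
    expect P pol h 1 (fun s' => ∑ i ∈ t, F i s') s = ∑ i ∈ t, expect P pol h 1 (F i) s := by
  simp only [expect, Finset.mul_sum]
  exact (Finset.sum_congr rfl fun a _ => Finset.sum_comm).trans Finset.sum_comm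

theorem eq_sum_expect_of_backward_recursion (H : ℕ) (D g : ℕ → S → ℝ)
    (hD : ∀ s, D (H + 1) s = 0)
    (hrec : ∀ h, 1 ≤ h → h ≤ H → ∀ s, D h s = g h s + expect P pol h 1 (D (h + 1)) s) :
    ∀ h, 1 ≤ h → h ≤ H + 1 → ∀ s,
      D h s = ∑ h' ∈ Finset.Icc h H, expect P pol h (h' - h) (g h') s := by
  suffices ∀ k h, h + k = H + 1 → 1 ≤ h → ∀ s,
      D h s = ∑ h' ∈ Finset.Icc h H, expect P pol h (h' - h) (g h') s from
    fun h h1 hH => this (H + 1 - h) h (by omega) h1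
  intro k
  induction k with
  | zero =>
    intro h hk _ s
    obtain rfl : h = H + 1 := by omega
    rw [Finset.Icc_eq_empty (by omega), Finset.sum_empty, hD]
  | succ k ih =>
    intro h hk h1 s
    have tail : ∀ h' ∈ Finset.Icc (h + 1) H, expect P pol h (h' - h) (g h') s =
        expect P pol h 1 (expect P pol (h + 1) (h' - (h + 1)) (g h')) s := by
      intro h' hh'
      rw [show h' - h = h' - (h + 1) + 1 by grind, expect_succ]
    have hnext : D (h + 1) = fun s' =>
        ∑ h' ∈ Finset.Icc (h + 1) H, expect P pol (h + 1) (h' - (h + 1)) (g h') s' :=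
      funext (ih (h + 1) (by omega) (by omega))
    rw [hrec h h1 (by omega), ← Finset.insert_Icc_add_one_left_eq_Icc (by omega : h ≤ H),
      Finset.sum_insert (by simp), Nat.sub_self, hnext, expect_one_sum, Finset.sum_congr rfl tail]
    rfl

end Expect

def bellmanDiscrepancy {S A : Type*} [Fintype S] [Fintype A] (P' P'' : ℕ → S → A → S → ℝ)
    (pol : ℕ → S → A → ℝ) (r' r'' : ℕ → S → A → ℝ) (V' : ℕ → S → ℝ) (h : ℕ) (t : S) : ℝ :=
  ∑ a, pol h t a * (r' h t a - r'' h t a + ∑ s', (P' h t a s' - P'' h t a s') * V' (h + 1) s')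

theorem IsVal.sub_eq_bellmanDiscrepancy_add_expect {S A : Type*} [Fintype S] [Fintype A]
    {H : ℕ} {P' P'' : ℕ → S → A → S → ℝ} {pol : ℕ → S → A → ℝ} {r' r'' : ℕ → S → A → ℝ}
    {Q' Q'' : ℕ → S → A → ℝ} {V' V'' : ℕ → S → ℝ}
    (hV' : IsVal H P' pol r' Q' V') (hV'' : IsVal H P'' pol r'' Q'' V'')
    (h : ℕ) (h1 : 1 ≤ h) (hH : h ≤ H) (s : S) :
    V' h s - V'' h s = bellmanDiscrepancy P' P'' pol r' r'' V' h s +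
      expect P'' pol h 1 (fun s' => V' (h + 1) s' - V'' (h + 1) s') s := by
  simp only [hV'.2.2.2 h h1 hH, hV''.2.2.2 h h1 hH, hV'.2.2.1 h h1 hH, hV''.2.2.1 h h1 hH,
    bellmanDiscrepancy, expect, ← Finset.sum_sub_distrib, ← Finset.sum_add_distrib]
  refine Finset.sum_congr rfl fun a _ => ?_
  simp only [sub_mul, mul_sub, Finset.sum_sub_distrib]
  ring

theorem simulation_lemma_general {S A : Type*} [Fintype S] [Fintype A] (H : ℕ)
    (P' P'' : ℕ → S → A → S → ℝ) (pol : ℕ → S → A → ℝ)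
    (r' r'' : ℕ → S → A → ℝ)
    (Q' Q'' : ℕ → S → A → ℝ) (V' V'' : ℕ → S → ℝ)
    (hV' : IsVal H P' pol r' Q' V') (hV'' : IsVal H P'' pol r'' Q'' V'') :
    ∀ h, 1 ≤ h → h ≤ H + 1 → ∀ s,
      V' h s - V'' h s =
        ∑ h' ∈ Finset.Icc h H,
          expect P'' pol h (h' - h)
            (fun t => ∑ a, pol h' t a *
              (r' h' t a - r'' h' t a
                + ∑ s', (P' h' t a s' - P'' h' t a s') * V' (h' + 1) s')) s :=
  eq_sum_expect_of_backward_recursion P'' pol H (fun h s => V' h s - V'' h s)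
    (bellmanDiscrepancy P' P'' pol r' r'' V')
    (fun s => by rw [hV'.2.1, hV''.2.1, sub_self])
    (hV'.sub_eq_bellmanDiscrepancy_add_expect hV'')

/-- Simulation lemma (finite case). -/
theorem simulation_lemma {S A : Type*} [Fintype S] [Fintype A] (H : ℕ)
    (P' P'' : ℕ → S → A → S → ℝ) (pol : ℕ → S → A → ℝ)
    (r' r'' : ℕ → S → A → ℝ)
    (hP' : IsProbKernel P') (hP'' : IsProbKernel P'') (hpol : IsPolicy pol)
    (Q' Q'' : ℕ → S → A → ℝ) (V' V'' : ℕ → S → ℝ)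
    (hV' : IsVal H P' pol r' Q' V') (hV'' : IsVal H P'' pol r'' Q'' V'') :
    ∀ h, 1 ≤ h → h ≤ H + 1 → ∀ s,
      V' h s - V'' h s =
        ∑ h' ∈ Finset.Icc h H,
          expect P'' pol h (h' - h)
            (fun t => ∑ a, pol h' t a *
              (r' h' t a - r'' h' t a
                + ∑ s', (P' h' t a s' - P'' h' t a s') * V' (h' + 1) s')) s :=
  simulation_lemma_general H P' P'' pol r' r'' Q' Q'' V' V'' hV' hV''
end

section
/- (Truncated-vs-true value decomposition across transitions, tabular.) Let P', P'' be transition kernels and r' a nonnegative reward on a finite-horizon MDP with finite S, A. Let V̿^π_{h,P',r'} denote the 3H-truncated value under (P', r'), and define g_h(s,a) := (P'_h − P''_h) V̿^π_{h+1, P', r'}(s,a). Then V̿^π_{1,P',r'}(s₁) − V^π_{1,P'',r'}(s₁) ≤ V^π_{1,P'',g}(s₁), where V^π_{·,P'',g} is the (untruncated) value under transition P'' with reward g. -/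
def IsTruncVal {S A : Type*} [Fintype S] [Fintype A] (H : ℕ) (th : ℝ)
    (P : ℕ → S → A → S → ℝ) (pol : ℕ → S → A → ℝ) (r : ℕ → S → A → ℝ)
    (Q : ℕ → S → A → ℝ) (V : ℕ → S → ℝ) : Prop :=
  (∀ s a, Q (H + 1) s a = 0) ∧ (∀ s, V (H + 1) s = 0) ∧
  (∀ h, 1 ≤ h → h ≤ H → ∀ s a,
      Q h s a = min th (r h s a + ∑ s', P h s a s' * V (h + 1) s')) ∧
  (∀ h, 1 ≤ h → h ≤ H → ∀ s, V h s = ∑ a, pol h s a * Q h s a)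

/-- Truncated-vs-true value decomposition across transitions, tabular case. -/
theorem trunc_value_sub_value_le {S A : Type*} [Fintype S] [Fintype A] (H : ℕ)
    (P' P'' : ℕ → S → A → S → ℝ) (pol : ℕ → S → A → ℝ) (r' : ℕ → S → A → ℝ)
    (hP' : IsProbKernel P') (hP'' : IsProbKernel P'') (hpol : IsPolicy pol)
    (hr' : ∀ h s a, 0 ≤ r' h s a)
    (Qdd Q'' Qg : ℕ → S → A → ℝ) (Vdd V'' Vg : ℕ → S → ℝ)
    (hdd : IsTruncVal H (3 * H : ℝ) P' pol r' Qdd Vdd)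
    (hV'' : IsVal H P'' pol r' Q'' V'')
    (g : ℕ → S → A → ℝ)
    (hg : ∀ h s a, g h s a = ∑ s', (P' h s a s' - P'' h s a s') * Vdd (h + 1) s')
    (hVg : IsVal H P'' pol g Qg Vg) :
    ∀ s, Vdd 1 s - V'' 1 s ≤ Vg 1 s := by
  obtain ⟨hQdd0, hVdd0, hQdd, hVdd⟩ := hdd
  obtain ⟨hQ''0, hV''0, hQ'', hV''⟩ := hV''
  obtain ⟨hQg0, hVg0, hQg, hVg⟩ := hVg
  have key : ∀ d, d ≤ H → ∀ s, Vdd (H + 1 - d) s - V'' (H + 1 - d) s ≤ Vg (H + 1 - d) s := by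
    intro d
    induction d with
    | zero => intro _ s; simp [hVdd0, hV''0, hVg0]
    | succ d ih =>
      intro hd s
      have ih' := ih (le_of_lt hd)
      set h := H + 1 - (d + 1) with hh
      have h1 : 1 ≤ h := by omega
      have hH : h ≤ H := by omega
      have hsucc : h + 1 = H + 1 - d := by omega
      have hQ : ∀ a, Qdd h s a - Q'' h s a ≤ Qg h s a := by
        intro a
        have e1 : Qdd h s a ≤ r' h s a + ∑ s', P' h s a s' * Vdd (h + 1) s' := by
          rw [hQdd h h1 hH s a]; exact min_le_right _ _
        have e2 := hQ'' h h1 hH s a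
        have e3 := hQg h h1 hH s a
        have eg : g h s a = ∑ s', P' h s a s' * Vdd (h + 1) s'
            - ∑ s', P'' h s a s' * Vdd (h + 1) s' := by
          rw [hg, ← Finset.sum_sub_distrib]
          exact Finset.sum_congr rfl fun s' _ => by ring
        have hsum : ∑ s', P'' h s a s' * Vdd (h + 1) s'
            - ∑ s', P'' h s a s' * V'' (h + 1) s'
            ≤ ∑ s', P'' h s a s' * Vg (h + 1) s' := by
          rw [← Finset.sum_sub_distrib]
          apply Finset.sum_le_sum
          intro s' _
          rw [← mul_sub]
          exact mul_le_mul_of_nonneg_left (by rw [hsucc]; exact ih' s') ((hP'' h s a).1 s')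
        linarith
      rw [hVdd h h1 hH s, hV'' h h1 hH s, hVg h h1 hH s, ← Finset.sum_sub_distrib]
      apply Finset.sum_le_sum
      intro a _
      rw [← mul_sub]
      exact mul_le_mul_of_nonneg_left (hQ a) ((hpol h s).1 a)
  intro s
  have := key H le_rfl s
  have e : H + 1 - H = 1 := by omega
  rwa [e] at this
end
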